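/- arXiv:1204.0207 — 2 statements merged into one kernel-verified Lean document; each statement's English description precedes it below -/
import Mathlib

section
/- With V the span of Γ = ℤⁿ ∩ F and Γ⊥ = ℤⁿ ∩ V⊥, the covolumes agree: vol(V⊥/Γ⊥) = vol(V/Γ). -/
open MeasureTheory

noncomputable section

/-- The integer lattice `ℤⁿ` viewed as an additive subgroup of `ℝⁿ`. -/
def intLat (n : ℕ) : AddSubgroup (EuclideanSpace ℝ (Fin n)) :=
  (Submodule.span ℤ (Set.range fun i : Fin n => (EuclideanSpace.single i (1:ℝ)))).toAddSubgroup

/-- `Γ = ℤⁿ ∩ F`. -/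
def gammaF (n : ℕ) (F : Submodule ℝ (EuclideanSpace ℝ (Fin n))) :
    AddSubgroup (EuclideanSpace ℝ (Fin n)) :=
  intLat n ⊓ F.toAddSubgroup

/-- `V = span_ℝ Γ`. -/
def Vspan (n : ℕ) (F : Submodule ℝ (EuclideanSpace ℝ (Fin n))) :
    Submodule ℝ (EuclideanSpace ℝ (Fin n))  :=
  Submodule.span ℝ ((gammaF n F : Set (EuclideanSpace ℝ (Fin n))))

/-- `Γ⊥ = ℤⁿ ∩ V⊥`. -/
def gammaPerp (n : ℕ) (F : Submodule ℝ (EuclideanSpace ℝ (Fin n))) :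
    AddSubgroup (EuclideanSpace ℝ (Fin n)) :=
  intLat n ⊓ ((Vspan n F)ᗮ).toAddSubgroup

/-- `Γ`, viewed inside `V`, as a `ℤ`-submodule of `V`. -/
def gammaIn (n : ℕ) (F : Submodule ℝ (EuclideanSpace ℝ (Fin n))) :
    Submodule ℤ ↥(Vspan n F) :=
  AddSubgroup.toIntSubmodule ((gammaF n F).comap (Vspan n F).subtype.toAddMonoidHom)

/-- `Γ⊥`, viewed inside `V⊥`, as a `ℤ`-submodule of `V⊥`. -/
def gammaPerpIn (n : ℕ) (F : Submodule ℝ (EuclideanSpace ℝ (Fin n))) :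
    Submodule ℤ ↥((Vspan n F)ᗮ) :=
  AddSubgroup.toIntSubmodule ((gammaPerp n F).comap ((Vspan n F)ᗮ).subtype.toAddMonoidHom)

open Module Submodule Matrix in
/-- Squared covolume equals determinant of the Gram matrix. -/
lemma covol_sq {W : Type*} [NormedAddCommGroup W] [InnerProductSpace ℝ W]
    [FiniteDimensional ℝ W] [MeasurableSpace W] [BorelSpace W]
    (L : Submodule ℤ W) [DiscreteTopology L] [IsZLattice ℝ L]
    {ι : Type*} [Fintype ι] [DecidableEq ι] (b : Basis ι ℤ L) :
    (ZLattice.covolume L volume) ^ 2 =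
      (Matrix.of fun i j => (inner ℝ ((b i : W)) ((b j : W)) : ℝ)).det := by
  have hcard : Fintype.card ι = finrank ℝ W := by
    rw [← ZLattice.rank ℝ L, finrank_eq_card_basis b]
  let o : OrthonormalBasis ι ℝ W :=
    (stdOrthonormalBasis ℝ W).reindex ((finCongr hcard.symm).trans (Fintype.equivFin ι).symm)
  have hvol : (volume (ZSpan.fundamentalDomain o.toBasis)).toReal = 1 := by
    rw [measure_congr (ZSpan.fundamentalDomain_ae_parallelepiped o.toBasis volume)]
    have : (parallelepiped (⇑o.toBasis)) = parallelepiped ⇑o := by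
      rw [o.coe_toBasis]
    rw [this, o.volume_parallelepiped]
    simp
  have h := ZLattice.covolume_eq_det_mul_measureReal L volume b o.toBasis
  rw [h, measureReal_def, hvol, mul_one, Basis.det_apply]
  set X : Matrix ι ι ℝ := o.toBasis.toMatrix ((↑) ∘ ⇑b) with hX
  have hXd : (Matrix.of fun i j => (inner ℝ ((b i : W)) ((b j : W)) : ℝ)) = Xᵀ * X := by
    ext i j
    simp only [Matrix.mul_apply, Matrix.transpose_apply, Matrix.of_apply]
    rw [← o.sum_inner_mul_inner (b i : W) (b j : W)]
    congr 1; ext k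
    rw [hX]
    simp only [Basis.toMatrix_apply, Function.comp_apply, o.coe_toBasis_repr_apply,
      o.repr_apply_apply]
    rw [real_inner_comm ((b i : W)) (o k)]
  rw [hXd, Matrix.det_mul, Matrix.det_transpose, sq, abs_mul_abs_self]

set_option maxHeartbeats 2000000 in
open Module Submodule Matrix in
/-- The covolumes of the lattice `Γ⊥` in `V⊥` and of the lattice `Γ` in `V`
(with respect to the Lebesgue measures induced by the Euclidean structure) agree:
`vol(V⊥/Γ⊥) = vol(V/Γ)`. -/
theorem covolume_gammaPerp_eq_covolume_gamma (n : ℕ)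
    (F : Submodule ℝ (EuclideanSpace ℝ (Fin n))) :
    ZLattice.covolume (gammaPerpIn n F) (volume : Measure ↥((Vspan n F)ᗮ)) =
      ZLattice.covolume (gammaIn n F) (volume : Measure ↥(Vspan n F)) := by
  classical
  -- the standard basis and the standard lattice
  set E := EuclideanSpace ℝ (Fin n)
  let eb : Basis (Fin n) ℝ E := (EuclideanSpace.basisFun (Fin n) ℝ).toBasis
  set Λ : Submodule ℤ E := span ℤ (Set.range ⇑eb) with hΛdef
  have hebapp : ∀ i, eb i = EuclideanSpace.single i 1 := by
    intro i
    simp [eb, EuclideanSpace.basisFun_apply]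
  have hΛint : ∀ x : E, x ∈ Λ ↔ x ∈ intLat n := by
    intro x
    have : Set.range ⇑eb = Set.range (fun i : Fin n => EuclideanSpace.single i (1:ℝ)) := by
      rw [show ⇑eb = fun i : Fin n => EuclideanSpace.single i (1:ℝ) from funext hebapp]
    rw [hΛdef, this]; exact Iff.rfl
  haveI : DiscreteTopology Λ := inferInstance
  haveI : IsZLattice ℝ Λ := instIsZLatticeRealSpan eb
  have hmemΛ : ∀ x : E, x ∈ Λ ↔ ∀ i, ∃ k : ℤ, x i = (k : ℝ) := by
    intro x
    rw [hΛdef, eb.mem_span_iff_repr_mem ℤ x]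
    constructor
    · intro h i
      obtain ⟨k, hk⟩ := h i
      exact ⟨k, hk.symm⟩
    · intro h i
      obtain ⟨k, hk⟩ := h i
      exact ⟨k, hk.symm⟩
  have hinner_sum : ∀ x y : E, (inner ℝ x y : ℝ) = ∑ i, x i * y i := by
    intro x y
    rw [PiLp.inner_apply]
    simp
    exact Finset.sum_congr rfl fun i _ => mul_comm _ _
  have hinnerInt : ∀ x y : E, x ∈ Λ → y ∈ Λ → ∃ k : ℤ, (inner ℝ x y : ℝ) = (k : ℝ) := by
    intro x y hx hy
    choose p hp using (hmemΛ x).mp hx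
    choose q hq using (hmemΛ y).mp hy
    refine ⟨∑ i, p i * q i, ?_⟩
    rw [hinner_sum]
    push_cast
    exact Finset.sum_congr rfl fun i _ => by rw [hp i, hq i]
  -- Smith normal form for Γ inside Λ
  let N : Submodule ℤ ↥Λ :=
    (AddSubgroup.toIntSubmodule (gammaF n F)).comap Λ.subtype
  obtain ⟨m, snf⟩ := N.smithNormalForm (eb.restrictScalars ℤ)
  obtain ⟨bM, bN, f, a, hsnf⟩ := snf
  have hNmem : ∀ x : ↥Λ, x ∈ N ↔ (x : E) ∈ gammaF n F := fun x => Iff.rfl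
  have hGF_sub_Λ : ∀ x : E, x ∈ gammaF n F → x ∈ Λ := by
    intro x hx
    exact (hΛint x).mpr hx.1
  -- the vectors u
  let u : Fin m → E := fun i => ((bM (f i) : ↥Λ) : E)
  have ha : ∀ i, a i ≠ 0 := by
    intro i hai
    apply bN.ne_zero i
    have := hsnf i
    rw [hai, zero_smul] at this
    exact Subtype.ext (by exact_mod_cast this)
  have hbNE : ∀ i, ((bN i : ↥Λ) : E) = (a i : ℝ) • u i := by
    intro i
    rw [hsnf i]
    push_cast [Int.cast_smul_eq_zsmul]
    rfl
  have hbN_mem : ∀ i, ((bN i : ↥Λ) : E) ∈ gammaF n F := fun i => (bN i).2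
  have hbN_V : ∀ i, ((bN i : ↥Λ) : E) ∈ Vspan n F := fun i => subset_span (hbN_mem i)
  have hu_V : ∀ i, u i ∈ Vspan n F := by
    intro i
    have : u i = ((a i : ℝ))⁻¹ • ((bN i : ↥Λ) : E) := by
      rw [hbNE i, smul_smul, inv_mul_cancel₀ (by exact_mod_cast ha i), one_smul]
    rw [this]
    exact smul_mem _ _ (hbN_V i)
  have hV_le_F : Vspan n F ≤ F := by
    rw [Vspan]
    apply span_le.mpr
    intro x hx
    exact hx.2
  have hu_mem : ∀ i, u i ∈ gammaF n F := by
    intro i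
    exact ⟨(hΛint _).mp (bM (f i)).2, hV_le_F (hu_V i)⟩
  -- Γ = ℤ-span of u
  have hspanZu : span ℤ (Set.range u) = AddSubgroup.toIntSubmodule (gammaF n F) := by
    apply le_antisymm
    · apply span_le.mpr
      rintro x ⟨i, rfl⟩
      exact hu_mem i
    · intro x hx
      have hxΛ : x ∈ Λ := hGF_sub_Λ x hx
      set y : ↥N := ⟨⟨x, hxΛ⟩, hx⟩ with hy
      have h1 : (y : ↥Λ) = ∑ i, (bN.repr y i * a i) • bM (f i) := by
        conv_lhs => rw [← bN.sum_repr y]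
        push_cast
        refine Finset.sum_congr rfl fun i _ => ?_
        rw [hsnf i, smul_smul]
      have h2 : x = ∑ i, (bN.repr y i * a i) • u i := by
        have := congrArg (Subtype.val : ↥Λ → E) h1
        simpa using this
      rw [h2]
      exact sum_mem fun i _ => smul_mem _ _ (subset_span (Set.mem_range_self i))
  have hV_eq : Vspan n F = span ℝ (Set.range u) := by
    rw [Vspan]
    conv_lhs =>
      rw [show ((gammaF n F : Set E)) =
        ((span ℤ (Set.range u) : Submodule ℤ E) : Set E) by rw [hspanZu]; rfl]
    exact span_span_of_tower ℤ ℝ (Set.range u)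
  -- the real basis attached to bM and its dual basis
  let β : Basis (Fin n) ℝ E := bM.ofZLatticeBasis ℝ Λ
  have hβ : ∀ j, β j = ((bM j : ↥Λ) : E) := fun j => bM.ofZLatticeBasis_apply ℝ Λ j
  have hβf : ∀ i, β (f i) = u i := fun i => hβ (f i)
  have hβΛ : ∀ j, β j ∈ Λ := by intro j; rw [hβ]; exact (bM j).2
  have hspanβ : span ℤ (Set.range ⇑β) = Λ := bM.ofZLatticeBasis_span ℝ
  let B : LinearMap.BilinForm ℝ E := innerₗ E
  have hBapp : ∀ x y : E, B x y = (inner ℝ x y : ℝ) := fun x y => rfl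
  have hB : B.Nondegenerate := by
    refine ⟨?_, ?_⟩ <;>
    · intro x hx
      have := hx x
      rw [hBapp] at this
      exact inner_self_eq_zero.mp this
  let δ : Basis (Fin n) ℝ E := B.dualBasis hB β
  have hδβ : ∀ i j, (inner ℝ (δ i) (β j) : ℝ) = if j = i then 1 else 0 := by
    intro i j
    rw [← hBapp]
    exact B.apply_dualBasis_left hB β i j
  have hδrepr : ∀ (x : E) i, δ.repr x i = (inner ℝ x (β i) : ℝ) := by
    intro x i
    rw [← hBapp]
    exact B.dualBasis_repr_apply hB β x i
  -- each δ i is an integer vector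
  have hδΛ : ∀ i, δ i ∈ Λ := by
    intro i
    rw [hmemΛ]
    intro k
    have hek : eb k ∈ Λ := subset_span ⟨k, rfl⟩
    have hint : ∀ y ∈ Λ, ∃ z : ℤ, (inner ℝ (δ i) y : ℝ) = (z : ℝ) := by
      intro y hy
      rw [← hspanβ] at hy
      induction hy using Submodule.span_induction with
      | mem y hy =>
          obtain ⟨j, rfl⟩ := hy
          rw [hδβ i j]
          by_cases h : j = i
          · exact ⟨1, by simp [h]⟩
          · exact ⟨0, by simp [h]⟩
      | zero => exact ⟨0, by simp⟩
      | add y z _ _ hy hz =>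
          obtain ⟨p, hp⟩ := hy
          obtain ⟨q, hq⟩ := hz
          exact ⟨p + q, by rw [inner_add_right, hp, hq]; push_cast; ring⟩
      | smul r y _ hy =>
          obtain ⟨p, hp⟩ := hy
          refine ⟨r * p, ?_⟩
          rw [← Int.cast_smul_eq_zsmul ℝ r y, inner_smul_right, hp]
          push_cast; ring
    obtain ⟨z, hz⟩ := hint (eb k) hek
    have h2 : (inner ℝ (δ i) (eb k) : ℝ) = δ i k := by
      rw [hebapp k, EuclideanSpace.inner_single_right]
      simp
    exact ⟨z, by rw [← h2, hz]⟩
  -- the index type for the complement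
  let ι₂ := {j : Fin n // j ∉ Set.range ⇑f}
  let c : ι₂ → E := fun j => δ j.val
  have hc_perp : ∀ j, c j ∈ (Vspan n F)ᗮ := by
    intro j
    rw [Submodule.mem_orthogonal]
    intro v hv
    rw [hV_eq] at hv
    induction hv using Submodule.span_induction with
    | mem v hv =>
        obtain ⟨i, rfl⟩ := hv
        rw [real_inner_comm, ← hβf i, hδβ]
        have : f i ≠ j.val := by
          intro h
          exact j.2 ⟨i, h⟩
        simp [this]
    | zero => simp
    | add y z _ _ hy hz => rw [inner_add_left, hy, hz]; ring
    | smul r y _ hy => rw [inner_smul_left, hy]; simp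
  -- decomposition of elements of V⊥
  have hrepr0 : ∀ x ∈ (Vspan n F)ᗮ, ∀ i : Fin m, δ.repr x (f i) = 0 := by
    intro x hx i
    rw [hδrepr, hβf i, real_inner_comm]
    exact (Submodule.mem_orthogonal _ x).mp hx (u i) (hu_V i)
  -- the equivalence σ : Fin m ⊕ ι₂ ≃ Fin n
  let σ : (Fin m ⊕ ι₂) ≃ Fin n :=
    (Equiv.sumCongr (Equiv.ofInjective ⇑f f.injective) (Equiv.refl ι₂)).trans
      (Equiv.sumCompl (fun j => j ∈ Set.range ⇑f))
  have hσl : ∀ i, σ (Sum.inl i) = f i := fun i => rfl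
  have hσr : ∀ j, σ (Sum.inr j) = j.val := fun j => rfl
  have hdecomp : ∀ x ∈ (Vspan n F)ᗮ, x = ∑ j : ι₂, (δ.repr x j.val) • c j := by
    intro x hx
    conv_lhs => rw [← δ.sum_repr x]
    rw [← Equiv.sum_comp σ (fun k => δ.repr x k • δ k), Fintype.sum_sum_type]
    have h1 : ∀ i : Fin m, δ.repr x (σ (Sum.inl i)) • δ (σ (Sum.inl i)) = 0 := by
      intro i
      rw [hσl, hrepr0 x hx i, zero_smul]
    rw [Finset.sum_congr rfl (fun i _ => h1 i)]
    simp only [Finset.sum_const_zero, zero_add]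
    exact Finset.sum_congr rfl fun j _ => by rw [hσr]
  -- Γ⊥ = ℤ-span of c
  have hc_mem : ∀ j, c j ∈ gammaPerp n F := by
    intro j
    exact ⟨(hΛint _).mp (hδΛ j.val), hc_perp j⟩
  have hspanZc : span ℤ (Set.range c) = AddSubgroup.toIntSubmodule (gammaPerp n F) := by
    apply le_antisymm
    · apply span_le.mpr
      rintro x ⟨j, rfl⟩
      exact hc_mem j
    · intro x hx
      have hxΛ : x ∈ Λ := (hΛint x).mpr hx.1
      have hxperp : x ∈ (Vspan n F)ᗮ := hx.2
      rw [hdecomp x hxperp]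
      refine sum_mem fun j _ => ?_
      obtain ⟨z, hz⟩ := hinnerInt x (β j.val) hxΛ (hβΛ j.val)
      rw [hδrepr, hz, Int.cast_smul_eq_zsmul]
      exact zsmul_mem (subset_span (Set.mem_range_self j)) z
  have hVperp_eq : (Vspan n F)ᗮ = span ℝ (Set.range c) := by
    apply le_antisymm
    · intro x hx
      rw [hdecomp x hx]
      exact sum_mem fun j _ => smul_mem _ _ (subset_span (Set.mem_range_self j))
    · apply span_le.mpr
      rintro x ⟨j, rfl⟩
      exact hc_perp j
  -- inclusion maps
  let JV : ↥(gammaIn n F) →ₗ[ℤ] E :=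
    (((Vspan n F).subtype).restrictScalars ℤ).comp (gammaIn n F).subtype
  have hJV : ∀ x : ↥(gammaIn n F), JV x = ((x : ↥(Vspan n F)) : E) := fun x => rfl
  have hJVinj : Function.Injective JV := by
    intro x y h
    exact Subtype.ext (Subtype.ext h)
  let JP : ↥(gammaPerpIn n F) →ₗ[ℤ] E :=
    ((((Vspan n F)ᗮ).subtype).restrictScalars ℤ).comp (gammaPerpIn n F).subtype
  have hJP : ∀ x : ↥(gammaPerpIn n F), JP x = ((x : ↥((Vspan n F)ᗮ)) : E) := fun x => rfl
  have hJPinj : Function.Injective JP := by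
    intro x y h
    exact Subtype.ext (Subtype.ext h)
  -- discreteness
  haveI hdV : DiscreteTopology ↥(gammaIn n F) := by
    let g0 : ↥(gammaIn n F) → ↥Λ := fun x => ⟨((x : ↥(Vspan n F)) : E), hGF_sub_Λ _ x.2⟩
    have hg0 : Continuous g0 :=
      Continuous.subtype_mk (continuous_subtype_val.comp continuous_subtype_val) _
    have hcomp : Topology.IsEmbedding ((Subtype.val : ↥Λ → E) ∘ g0) := by
      have : ((Subtype.val : ↥Λ → E) ∘ g0) =
          (Subtype.val : ↥(Vspan n F) → E) ∘ (Subtype.val) := rfl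
      rw [this]
      exact Topology.IsEmbedding.subtypeVal.comp Topology.IsEmbedding.subtypeVal
    exact (Topology.IsEmbedding.of_comp hg0 continuous_subtype_val hcomp).discreteTopology
  haveI hdP : DiscreteTopology ↥(gammaPerpIn n F) := by
    let g0 : ↥(gammaPerpIn n F) → ↥Λ := fun x => ⟨((x : ↥((Vspan n F)ᗮ)) : E), (hΛint _).mpr x.2.1⟩
    have hg0 : Continuous g0 :=
      Continuous.subtype_mk (continuous_subtype_val.comp continuous_subtype_val) _
    have hcomp : Topology.IsEmbedding ((Subtype.val : ↥Λ → E) ∘ g0) := by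
      have : ((Subtype.val : ↥Λ → E) ∘ g0) =
          (Subtype.val : ↥((Vspan n F)ᗮ) → E) ∘ (Subtype.val) := rfl
      rw [this]
      exact Topology.IsEmbedding.subtypeVal.comp Topology.IsEmbedding.subtypeVal
    exact (Topology.IsEmbedding.of_comp hg0 continuous_subtype_val hcomp).discreteTopology
  -- lattice instances
  haveI hzV : IsZLattice ℝ (gammaIn n F) := by
    constructor
    apply Submodule.map_injective_of_injective
      (show Function.Injective (Vspan n F).subtype from Subtype.coe_injective)
    rw [Submodule.map_span, Submodule.map_subtype_top]
    have himg : (Vspan n F).subtype '' ((gammaIn n F : Set ↥(Vspan n F))) = (gammaF n F : Set E) := by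
      ext x
      constructor
      · rintro ⟨y, hy, rfl⟩
        exact hy
      · intro hx
        exact ⟨⟨x, subset_span hx⟩, hx, rfl⟩
    rw [himg]
    rfl
  haveI hzP : IsZLattice ℝ (gammaPerpIn n F) := by
    constructor
    apply Submodule.map_injective_of_injective
      (show Function.Injective ((Vspan n F)ᗮ).subtype from Subtype.coe_injective)
    rw [Submodule.map_span, Submodule.map_subtype_top]
    have himg : ((Vspan n F)ᗮ).subtype '' ((gammaPerpIn n F : Set ↥((Vspan n F)ᗮ))) =
        (gammaPerp n F : Set E) := by
      ext x
      constructor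
      · rintro ⟨y, hy, rfl⟩
        exact hy
      · intro hx
        exact ⟨⟨x, hx.2⟩, hx, rfl⟩
    rw [himg]
    calc span ℝ ((gammaPerp n F : Set E))
        = span ℝ ((span ℤ (Set.range c) : Submodule ℤ E) : Set E) := by rw [hspanZc]; rfl
      _ = span ℝ (Set.range c) := span_span_of_tower ℤ ℝ (Set.range c)
      _ = (Vspan n F)ᗮ := hVperp_eq.symm
  -- independence
  have hZsmul_inj : Function.Injective fun r : ℤ => r • (1:ℝ) := by
    intro p q h
    simp only [zsmul_eq_mul, mul_one] at h
    exact_mod_cast h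
  have hu_indep : LinearIndependent ℝ u := by
    have : u = ⇑β ∘ ⇑f := by funext i; exact (hβf i).symm
    rw [this]
    exact β.linearIndependent.comp ⇑f f.injective
  have hc_indep : LinearIndependent ℝ c := by
    have : c = ⇑δ ∘ (Subtype.val : ι₂ → Fin n) := rfl
    rw [this]
    exact δ.linearIndependent.comp _ Subtype.val_injective
  -- the bases of the lattices
  let U : Fin m → ↥(gammaIn n F) := fun i => ⟨⟨u i, hu_V i⟩, hu_mem i⟩
  have hJVU : ⇑JV ∘ U = u := rfl
  have hU_indep : LinearIndependent ℤ U := by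
    apply LinearIndependent.of_comp JV
    rw [hJVU]
    exact hu_indep.restrict_scalars hZsmul_inj
  have hrangeJV : LinearMap.range JV = AddSubgroup.toIntSubmodule (gammaF n F) := by
    ext x
    rw [LinearMap.mem_range]
    constructor
    · rintro ⟨y, rfl⟩
      exact y.2
    · intro hx
      exact ⟨⟨⟨x, subset_span hx⟩, hx⟩, rfl⟩
  have hUspan : span ℤ (Set.range U) = ⊤ := by
    apply Submodule.map_injective_of_injective hJVinj
    rw [Submodule.map_span, Submodule.map_top, ← Set.range_comp, hJVU, hrangeJV]
    exact hspanZu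
  let bU : Basis (Fin m) ℤ ↥(gammaIn n F) := Basis.mk hU_indep (le_of_eq hUspan.symm)
  let C : ι₂ → ↥(gammaPerpIn n F) := fun j => ⟨⟨c j, hc_perp j⟩, hc_mem j⟩
  have hJPC : ⇑JP ∘ C = c := rfl
  have hC_indep : LinearIndependent ℤ C := by
    apply LinearIndependent.of_comp JP
    rw [hJPC]
    exact hc_indep.restrict_scalars hZsmul_inj
  have hrangeJP : LinearMap.range JP = AddSubgroup.toIntSubmodule (gammaPerp n F) := by
    ext x
    rw [LinearMap.mem_range]
    constructor
    · rintro ⟨y, rfl⟩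
      exact y.2
    · intro hx
      exact ⟨⟨⟨x, hx.2⟩, hx⟩, rfl⟩
  have hCspan : span ℤ (Set.range C) = ⊤ := by
    apply Submodule.map_injective_of_injective hJPinj
    rw [Submodule.map_span, Submodule.map_top, ← Set.range_comp, hJPC, hrangeJP]
    exact hspanZc
  let bC : Basis ι₂ ℤ ↥(gammaPerpIn n F) := Basis.mk hC_indep (le_of_eq hCspan.symm)
  -- covolumes via Gram determinants
  set Gu : Matrix (Fin m) (Fin m) ℝ := Matrix.of fun i j => (inner ℝ (u i) (u j) : ℝ) with hGu
  set Gc : Matrix ι₂ ι₂ ℝ := Matrix.of fun i j => (inner ℝ (c i) (c j) : ℝ) with hGc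
  have hcovolU : (ZLattice.covolume (gammaIn n F) volume) ^ 2 = Gu.det := by
    rw [covol_sq (gammaIn n F) bU, hGu]
    congr 1
    ext i j
    simp only [Matrix.of_apply]
    rw [show ⇑bU = U from Basis.coe_mk _ _]
    rw [Submodule.coe_inner]
  have hcovolC : (ZLattice.covolume (gammaPerpIn n F) volume) ^ 2 = Gc.det := by
    rw [covol_sq (gammaPerpIn n F) bC, hGc]
    congr 1
    ext i j
    simp only [Matrix.of_apply]
    rw [show ⇑bC = C from Basis.coe_mk _ _]
    rw [Submodule.coe_inner]
  -- the matrix computation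
  let g : (Fin m ⊕ ι₂) → E := Sum.elim u c
  let P : Matrix (Fin n) (Fin n) ℝ := Matrix.of fun k j => β j k
  let Q : Matrix (Fin n) (Fin n) ℝ := Matrix.of fun k j => g (σ.symm j) k
  have hinner0uc : ∀ i j, (inner ℝ (u i) (c j) : ℝ) = 0 := fun i j =>
    (Submodule.mem_orthogonal _ _).mp (hc_perp j) (u i) (hu_V i)
  -- Q^T * Q
  let S : Matrix (Fin m ⊕ ι₂) (Fin m ⊕ ι₂) ℝ := Matrix.of fun p q => (inner ℝ (g p) (g q) : ℝ)
  have hS : S = Matrix.fromBlocks Gu 0 0 Gc := by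
    ext p q
    cases p with
    | inl i =>
      cases q with
      | inl i' => rfl
      | inr j =>
        show (inner ℝ (u i) (c j) : ℝ) = (0 : Matrix (Fin m) ι₂ ℝ) i j
        rw [Matrix.zero_apply]
        exact hinner0uc i j
    | inr j =>
      cases q with
      | inl i =>
        show (inner ℝ (c j) (u i) : ℝ) = (0 : Matrix ι₂ (Fin m) ℝ) j i
        rw [Matrix.zero_apply, real_inner_comm]
        exact hinner0uc i j
      | inr j' => rfl
  have hQQ : Qᵀ * Q = S.submatrix ⇑σ.symm ⇑σ.symm := by
    ext j j'
    simp only [Matrix.mul_apply, Matrix.transpose_apply, Matrix.submatrix_apply,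
      Matrix.of_apply, S, Q]
    rw [hinner_sum]
  have hdetS : S.det = Gu.det * Gc.det := by
    rw [hS, Matrix.det_fromBlocks_zero₁₂]
  have hQ2 : Q.det ^ 2 = Gu.det * Gc.det := by
    have h1 : (Qᵀ * Q).det = S.det := by rw [hQQ, Matrix.det_submatrix_equiv_self]
    rw [Matrix.det_mul, Matrix.det_transpose] at h1
    rw [← hdetS, ← h1, sq]
  -- P^T * Q
  let R : Matrix ι₂ (Fin m) ℝ := Matrix.of fun j i => (inner ℝ (β j.val) (u i) : ℝ)
  let T : Matrix (Fin m ⊕ ι₂) (Fin m ⊕ ι₂) ℝ := Matrix.of fun p q => (inner ℝ (β (σ p)) (g q) : ℝ)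
  have hT : T = Matrix.fromBlocks Gu 0 R 1 := by
    ext p q
    cases p with
    | inl i => cases q with
      | inl i' =>
          show (inner ℝ (β (σ (Sum.inl i))) (u i') : ℝ) = Gu i i'
          rw [hσl, hβf]
          rfl
      | inr j =>
          show (inner ℝ (β (σ (Sum.inl i))) (c j) : ℝ) = 0
          rw [hσl, hβf]
          exact hinner0uc i j
    | inr j' => cases q with
      | inl i =>
          show (inner ℝ (β (σ (Sum.inr j'))) (u i) : ℝ) = R j' i
          rw [hσr]
          rfl
      | inr j =>
          show (inner ℝ (β (σ (Sum.inr j'))) (c j) : ℝ) = (1 : Matrix ι₂ ι₂ ℝ) j' j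
          rw [hσr, real_inner_comm, hδβ, Matrix.one_apply]
          by_cases h : j' = j
          · simp [h]
          · have : ¬ (j'.val = j.val) := fun hh => h (Subtype.ext hh)
            simp [h, this]
  have hPQ : Pᵀ * Q = T.submatrix ⇑σ.symm ⇑σ.symm := by
    ext j j'
    simp only [Matrix.mul_apply, Matrix.transpose_apply, Matrix.submatrix_apply,
      Matrix.of_apply, T, P, Q]
    rw [hinner_sum, Equiv.apply_symm_apply]
  have hdetT : T.det = Gu.det := by
    rw [hT, Matrix.det_fromBlocks_zero₁₂, Matrix.det_one, mul_one]
  have hPQdet : P.det * Q.det = Gu.det := by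
    have h1 : (Pᵀ * Q).det = T.det := by rw [hPQ, Matrix.det_submatrix_equiv_self]
    rw [Matrix.det_mul, Matrix.det_transpose] at h1
    rw [h1, hdetT]
  -- P has determinant ±1
  have hebrepr : ∀ (x : E) (k : Fin n), eb.repr x k = x k := fun x k => rfl
  have hPmat : P = eb.toMatrix ⇑β := by
    ext k j
    simp only [P, Matrix.of_apply, Basis.toMatrix_apply]
    rw [hebrepr]
  have hPint : ∀ k j, ∃ z : ℤ, P k j = (z : ℝ) := by
    intro k j
    exact (hmemΛ (β j)).mp (hβΛ j) k
  choose Pz hPz using hPint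
  let Q' : Matrix (Fin n) (Fin n) ℝ := β.toMatrix ⇑eb
  have hQ'int : ∀ k j, ∃ z : ℤ, Q' k j = (z : ℝ) := by
    intro k j
    have hmem : eb j ∈ span ℤ (Set.range ⇑β) := by
      rw [hspanβ]
      exact subset_span (Set.mem_range_self j)
    obtain ⟨z, hz⟩ := (β.mem_span_iff_repr_mem ℤ (eb j)).mp hmem k
    exact ⟨z, hz.symm⟩
  choose Qz hQz using hQ'int
  have hPQ'one : P * Q' = 1 := by
    rw [hPmat]
    exact eb.toMatrix_mul_toMatrix_flip β
  have hPZcast : (Matrix.of Pz).map (Int.cast : ℤ → ℝ) = P := by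
    ext k j
    simp [hPz k j]
  have hQZcast : (Matrix.of Qz).map (Int.cast : ℤ → ℝ) = Q' := by
    ext k j
    simp [hQz k j]
  have hcast : ((Matrix.of Pz) * (Matrix.of Qz)).map (Int.cast : ℤ → ℝ) = 1 := by
    have hmm : ((Matrix.of Pz) * (Matrix.of Qz)).map (⇑(Int.castRingHom ℝ)) =
        (Matrix.of Pz).map (⇑(Int.castRingHom ℝ)) * (Matrix.of Qz).map (⇑(Int.castRingHom ℝ)) :=
      Matrix.map_mul
    have h1 : (Matrix.of Pz).map (⇑(Int.castRingHom ℝ)) = P := hPZcast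
    have h2 : (Matrix.of Qz).map (⇑(Int.castRingHom ℝ)) = Q' := hQZcast
    calc ((Matrix.of Pz) * (Matrix.of Qz)).map (Int.cast : ℤ → ℝ)
        = (Matrix.of Pz).map (⇑(Int.castRingHom ℝ)) * (Matrix.of Qz).map (⇑(Int.castRingHom ℝ)) := hmm
      _ = P * Q' := by rw [h1, h2]
      _ = 1 := hPQ'one
  have hmulZ : (Matrix.of Pz) * (Matrix.of Qz) = 1 := by
    ext k j
    have h2 := congrFun (congrFun hcast k) j
    rw [Matrix.map_apply] at h2
    by_cases hkj : k = j
    · subst hkj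
      simp only [Matrix.one_apply_eq] at h2 ⊢
      exact_mod_cast h2
    · simp only [Matrix.one_apply_ne hkj] at h2 ⊢
      exact_mod_cast h2
  have hdetPZ : P.det = ((Matrix.of Pz).det : ℝ) := by
    have h1 : (Matrix.of Pz).map (⇑(Int.castRingHom ℝ)) = P := hPZcast
    rw [← h1]
    exact ((Int.castRingHom ℝ).map_det (Matrix.of Pz)).symm
  have hP2 : P.det ^ 2 = 1 := by
    have h1 : (Matrix.of Pz).det * (Matrix.of Qz).det = 1 := by
      rw [← Matrix.det_mul, hmulZ, Matrix.det_one]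
    rcases Int.eq_one_or_neg_one_of_mul_eq_one' h1 with ⟨h, _⟩ | ⟨h, _⟩ <;>
      rw [hdetPZ, h] <;> norm_num
  -- conclusion
  have hGu_pos : 0 < Gu.det := by
    rw [← hcovolU]
    exact pow_pos (ZLattice.covolume_pos (gammaIn n F) volume) 2
  have hGcGu : Gc.det = Gu.det := by
    have h1 : Gu.det ^ 2 = Gu.det * Gc.det := by
      calc Gu.det ^ 2 = (P.det * Q.det) ^ 2 := by rw [hPQdet]
        _ = P.det ^ 2 * Q.det ^ 2 := by ring
        _ = Gu.det * Gc.det := by rw [hP2, hQ2, one_mul]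
    have h2 := hGu_pos.ne'
    nlinarith [h1]
  have hfin1 : (ZLattice.covolume (gammaPerpIn n F) volume) ^ 2 =
      (ZLattice.covolume (gammaIn n F) volume) ^ 2 := by
    rw [hcovolC, hcovolU, hGcGu]
  have hp1 := ZLattice.covolume_pos (gammaPerpIn n F) (volume : Measure ↥((Vspan n F)ᗮ))
  have hp2 := ZLattice.covolume_pos (gammaIn n F) (volume : Measure ↥(Vspan n F))
  nlinarith [hfin1, hp1, hp2]
end
end

section
/- Let D be a bounded measurable subset of ℝ^m and for t_F, t_H > 0 (relative to an orthogonal decomposition ℝ^m = F_V ⊕ H) let D_{t_F,t_H} = ⋃_{x∈D}(x + B(0,t_F,t_H)) be the anisotropic outer neighborhood and D_{-t_F,-t_H} = ℝ^m \ (ℝ^m \ D)_{t_F,t_H}. Let φ_ε = χ_{T_ε(D)} * ρ_{t_F,t_H} where T_ε is identity on F_V and scaling by ε⁻¹ on H. Then for any discrete set L ⊆ ℝ^m and any ε, t_F, t_H > 0: Σ_{k∈L}(χ_{T_ε(D_{-t_F,-ε t_H})} * ρ_{t_F,t_H})(k) ≤ #(T_ε(D) ∩ L) ≤ Σ_{k∈L}(χ_{T_ε(D_{t_F,ε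 t_H})} * ρ_{t_F,t_H})(k). -/
open MeasureTheory

noncomputable section

/-- The model for `ℝᵐ = F_V ⊕ H`. -/
abbrev Esp (a b : ℕ) := EuclideanSpace ℝ (Fin a ⊕ Fin b)

/-- `|x_F|²`, the squared norm of the `F_V`-component. -/
def sqF (a b : ℕ) (x : Esp a b) : ℝ := ∑ i, x (Sum.inl i) ^ 2

/-- `|x_H|²`, the squared norm of the `H`-component. -/
def sqH (a b : ℕ) (x : Esp a b) : ℝ := ∑ i, x (Sum.inr i) ^ 2

/-- The ellipsoid `B(0,t_F,t_H)`. -/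
def ellipsoid (a b : ℕ) (tF tH : ℝ) : Set (Esp a b) :=
  {x | sqF a b x / tF ^ 2 + sqH a b x / tH ^ 2 < 1}

/-- The anisotropic outer neighborhood `D_{t_F,t_H} = ⋃_{x ∈ D} (x + B(0,t_F,t_H))`. -/
def nbhd (a b : ℕ) (D : Set (Esp a b)) (tF tH : ℝ) : Set (Esp a b) :=
  {y | ∃ x ∈ D, y - x ∈ ellipsoid a b tF tH}

/-- The inner neighborhood `D_{-t_F,-t_H} = ℝᵐ \ (ℝᵐ \ D)_{t_F,t_H}`. -/
def nbhdNeg (a b : ℕ) (D : Set (Esp a b)) (tF tH : ℝ) : Set (Esp a b) :=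
  Set.univ \ nbhd a b (Set.univ \ D) tF tH

/-- The anisotropic dilation `T_ε`: identity on `F_V`, scaling by `ε⁻¹` on `H`. -/
def Tdil (a b : ℕ) (ε : ℝ) (x : Esp a b) : Esp a b :=
  WithLp.toLp 2 fun j => match j with
    | Sum.inl i => x (Sum.inl i)
    | Sum.inr i => ε⁻¹ * x (Sum.inr i)

/-- The convolution `(χ_{T_ε(D')} ∗ ρ)(k)`. -/
def convInd (a b : ℕ) (ε : ℝ) (ρb : Esp a b → ℝ) (D' : Set (Esp a b)) (k : Esp a b) : ℝ :=
  ∫ x, Set.indicator (Tdil a b ε '' D') (fun _ => (1 : ℝ)) (k - x) * ρb x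


section Aux

variable {a b : ℕ}

lemma mem_ellipsoid_neg {tF tH : ℝ} {x : Esp a b} (hx : x ∈ ellipsoid a b tF tH) :
    -x ∈ ellipsoid a b tF tH := by
  simpa [ellipsoid, sqF, sqH, PiLp.neg_apply, neg_sq] using hx

lemma Sdil_mem {ε tF tH : ℝ} (hε : 0 < ε) {x : Esp a b}
    (hx : x ∈ ellipsoid a b tF tH) :
    Tdil a b ε⁻¹ x ∈ ellipsoid a b tF (ε * tH) := by
  have hF : sqF a b (Tdil a b ε⁻¹ x) = sqF a b x := rfl
  have hH : sqH a b (Tdil a b ε⁻¹ x) = ε ^ 2 * sqH a b x := by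
    simp [sqH, Tdil, inv_inv, Finset.mul_sum, mul_pow]
  simp only [ellipsoid, Set.mem_setOf_eq] at hx ⊢
  rw [hF, hH, mul_pow, mul_div_mul_left _ _ (by positivity : (ε : ℝ) ^ 2 ≠ 0)]
  exact hx

lemma Tdil_add (ε : ℝ) (x y : Esp a b) :
    Tdil a b ε (x + y) = Tdil a b ε x + Tdil a b ε y := by
  ext j; cases j with
  | inl i => simp [Tdil, PiLp.add_apply]
  | inr i => simp [Tdil, PiLp.add_apply]; ring

lemma Tdil_Sdil (ε : ℝ) (hε : ε ≠ 0) (x : Esp a b) :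
    Tdil a b ε (Tdil a b ε⁻¹ x) = x := by
  ext j; cases j with
  | inl i => rfl
  | inr i => simp [Tdil, inv_inv]; field_simp

lemma Tdil_sub_eq (ε : ℝ) (hε : ε ≠ 0) (d x : Esp a b) :
    Tdil a b ε d - x = Tdil a b ε (d - Tdil a b ε⁻¹ x) := by
  ext j; cases j with
  | inl i => simp [Tdil, PiLp.sub_apply]
  | inr i =>
    simp only [Tdil, PiLp.sub_apply, inv_inv]
    field_simp

end Aux

/-- The sandwich estimate: for any discrete set `L` and any `ε, t_F, t_H > 0`,
`Σ_{k∈L} (χ_{T_ε(D_{-t_F,-εt_H})} ∗ ρ_{t_F,t_H})(k) ≤ #(T_ε(D) ∩ L)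
  ≤ Σ_{k∈L} (χ_{T_ε(D_{t_F,εt_H})} ∗ ρ_{t_F,t_H})(k)`,
where the cardinality `#(T_ε(D) ∩ L)` is written as a sum in `ℝ≥0∞`. -/
theorem conv_sandwich (a b : ℕ) (D : Set (Esp a b))
    (hDb : Bornology.IsBounded D) (hDm : MeasurableSet D)
    (ε tF tH : ℝ) (hε : 0 < ε) (htF : 0 < tF) (htH : 0 < tH)
    (ρb : Esp a b → ℝ) (hρ0 : ∀ x, 0 ≤ ρb x)
    (hρsupp : Function.support ρb ⊆ ellipsoid a b tF tH)
    (hρint : ∫ x, ρb x = 1)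
    (L : Set (Esp a b)) (hL : DiscreteTopology ↥L) :
    (∑' k : L, ENNReal.ofReal (convInd a b ε ρb (nbhdNeg a b D tF (ε * tH)) k)) ≤
        (∑' k : L, Set.indicator (Tdil a b ε '' D) (fun _ => (1 : ENNReal)) k) ∧
      (∑' k : L, Set.indicator (Tdil a b ε '' D) (fun _ => (1 : ENNReal)) k) ≤
        ∑' k : L, ENNReal.ofReal (convInd a b ε ρb (nbhd a b D tF (ε * tH)) k) := by
  classical
  have hεne : ε ≠ 0 := ne_of_gt hε
  have hρint' : Integrable ρb := by
    by_contra h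
    rw [integral_undef h] at hρint
    exact one_ne_zero hρint.symm
  have hind_nonneg : ∀ (D' : Set (Esp a b)) (k x : Esp a b),
      0 ≤ Set.indicator (Tdil a b ε '' D') (fun _ => (1 : ℝ)) (k - x) * ρb x :=
    fun D' k x => mul_nonneg (Set.indicator_nonneg (fun _ _ => zero_le_one) _) (hρ0 x)
  have hconv_le_one : ∀ (D' : Set (Esp a b)) (k : Esp a b),
      convInd a b ε ρb D' k ≤ 1 := by
    intro D' k
    rw [← hρint]
    apply integral_mono_of_nonneg
    · exact Filter.Eventually.of_forall fun x => hind_nonneg D' k x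
    · exact hρint'
    · refine Filter.Eventually.of_forall fun x => ?_
      calc Set.indicator (Tdil a b ε '' D') (fun _ => (1 : ℝ)) (k - x) * ρb x
          ≤ 1 * ρb x := by
            apply mul_le_mul_of_nonneg_right _ (hρ0 x)
            exact Set.indicator_apply_le' (fun _ => le_refl 1) (fun _ => zero_le_one)
        _ = ρb x := one_mul _
  constructor
  · apply ENNReal.tsum_le_tsum
    intro k
    by_cases hk : (k : Esp a b) ∈ Tdil a b ε '' D
    · rw [Set.indicator_of_mem hk]
      exact ENNReal.ofReal_le_one.mpr (hconv_le_one _ _)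
    · rw [Set.indicator_of_notMem hk]
      have hzero : ∀ x, Set.indicator (Tdil a b ε '' nbhdNeg a b D tF (ε * tH))
          (fun _ => (1 : ℝ)) ((k : Esp a b) - x) * ρb x = 0 := by
        intro x
        by_cases hx : ρb x = 0
        · rw [hx, mul_zero]
        · have hxe : x ∈ ellipsoid a b tF tH := hρsupp hx
          rw [Set.indicator_of_notMem, zero_mul]
          rintro ⟨y, hy, hTy⟩
          apply hk
          refine ⟨y + Tdil a b ε⁻¹ x, ?_, ?_⟩
          · by_contra hmem
            exact hy.2 ⟨y + Tdil a b ε⁻¹ x, ⟨trivial, hmem⟩, by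
              rw [sub_add_cancel_left]
              exact mem_ellipsoid_neg (Sdil_mem hε hxe)⟩
          · rw [Tdil_add, Tdil_Sdil _ hεne, hTy, sub_add_cancel]
      have h0 : convInd a b ε ρb (nbhdNeg a b D tF (ε * tH)) k = 0 := by
        unfold convInd
        simp only [hzero, integral_zero]
      rw [h0]
      simp
  · apply ENNReal.tsum_le_tsum
    intro k
    by_cases hk : (k : Esp a b) ∈ Tdil a b ε '' D
    · rw [Set.indicator_of_mem hk]
      obtain ⟨d, hd, hTd⟩ := hk
      have heq : ∀ x, Set.indicator (Tdil a b ε '' nbhd a b D tF (ε * tH))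
          (fun _ => (1 : ℝ)) ((k : Esp a b) - x) * ρb x = ρb x := by
        intro x
        by_cases hx : ρb x = 0
        · rw [hx, mul_zero]
        · have hxe : x ∈ ellipsoid a b tF tH := hρsupp hx
          rw [Set.indicator_of_mem, one_mul]
          refine ⟨d - Tdil a b ε⁻¹ x, ⟨d, hd, ?_⟩, ?_⟩
          · rw [sub_sub_cancel_left]
            exact mem_ellipsoid_neg (Sdil_mem hε hxe)
          · rw [← Tdil_sub_eq _ hεne, hTd]
      have h1 : convInd a b ε ρb (nbhd a b D tF (ε * tH)) k = 1 := by
        unfold convInd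
        simp only [heq]
        exact hρint
      rw [h1]
      simp
    · rw [Set.indicator_of_notMem hk]
      exact zero_le
end
end
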